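/- arXiv:2309.07611 — 3 statements merged into one kernel-verified Lean document; each statement's English description precedes it below -/
import Mathlib

section
/- Let Y be geometrically distributed with parameter p on the non-negative integers, i.e. P(Y = k) = p(1-p)^k for k ≥ 0. Then for any set A of non-negative integers, the function g_A defined recursively by g_A(k) = 0 for k ≤ 0 and (1-p)g_A(k+1) - g_A(k) = I(k ∈ A) - P(Y ∈ A) satisfies |g_A(j) - g_A(j+k)| ≤ min{|k|, 1/p} for all integers j, k. -/
/-!
Write `q = 1 - p` and `T m = ∑ᵢ qⁱ 1_A(m + i)`, so that `T m = 1_A(m) + q T(m + 1)` and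
`0 ≤ T ≤ 1/p`. Since `P(Y ∈ A) = p T 0`, the function `k ↦ T 0 - T k` solves the Stein
equation with value `0` at `0`, and so it is `g_A` on `k ≥ 0`. Hence `g_A` takes its values in
`[T 0 - 1/p, T 0]`, an interval that also contains `0`, and its increments
`g_A(k + 1) - g_A(k) = 1_A(k) - p T(k + 1)` lie in `[-1, 1]`.
-/

theorem eq_zero_of_eq_mul_succ {M : Type*} [MulZeroClass M] [NoZeroDivisors M]
    {h : ℕ → M} {q : M} (h0 : h 0 = 0) (hrec : ∀ n, h n = q * h (n + 1)) (n : ℕ) :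
    h n = 0 := by
  induction n with
  | zero => exact h0
  | succ n ih =>
    rcases mul_eq_zero.mp ((hrec n).symm.trans ih) with hq | hn
    · rw [hrec (n + 1), hq, zero_mul]
    · exact hn

theorem abs_sub_add_le_mul_abs {g : ℤ → ℝ} {C : ℝ} (hg : ∀ n, |g (n + 1) - g n| ≤ C)
    (j k : ℤ) : |g j - g (j + k)| ≤ C * |(k : ℝ)| := by
  have forward (a : ℤ) (n : ℕ) : |g a - g (a + n)| ≤ C * n := by
    induction n with
    | zero => simp
    | succ n ih =>
      calc |g a - g (a + (n + 1 : ℕ))|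
          ≤ |g a - g (a + n)| + |g (a + n + 1) - g (a + n)| := by
            rw [abs_sub_comm (g (a + n + 1)), Nat.cast_succ, ← add_assoc]
            exact abs_sub_le _ _ _
        _ ≤ C * n + C := add_le_add ih (hg _)
        _ = C * (n + 1 : ℕ) := by push_cast; ring
  obtain ⟨n, rfl | rfl⟩ := Int.eq_nat_or_neg k
  · simpa using forward j n
  · simpa [abs_sub_comm] using forward (j + -n) n

noncomputable def discountedTail (q : ℝ) (f : ℤ → ℝ) (m : ℤ) : ℝ :=
  ∑' i : ℕ, q ^ i * f (m + i)

namespace discountedTail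

variable {q : ℝ} {f : ℤ → ℝ}

theorem eq_add_mul_succ {m : ℤ} (hs : Summable fun i : ℕ => q ^ i * f (m + i)) :
    discountedTail q f m = f m + q * discountedTail q f (m + 1) := by
  rw [discountedTail, hs.tsum_eq_zero_add, discountedTail, ← tsum_mul_left]
  simp only [pow_zero, one_mul, Nat.cast_zero, add_zero]
  congr 1
  refine tsum_congr fun i => ?_
  push_cast
  ring_nf

variable (hq0 : 0 ≤ q) (hf : ∀ m, f m ∈ Set.Icc 0 1)
include hq0 hf

theorem nonneg (m : ℤ) : 0 ≤ discountedTail q f m :=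
  tsum_nonneg fun i => mul_nonneg (pow_nonneg hq0 i) (hf _).1

variable (hq1 : q < 1)
include hq1

theorem summable (m : ℤ) : Summable fun i : ℕ => q ^ i * f (m + i) :=
  (summable_geometric_of_lt_one hq0 hq1).of_nonneg_of_le
    (fun i => mul_nonneg (pow_nonneg hq0 i) (hf _).1)
    (fun i => mul_le_of_le_one_right (pow_nonneg hq0 i) (hf _).2)

theorem le_inv_one_sub (m : ℤ) : discountedTail q f m ≤ (1 - q)⁻¹ := by
  rw [← tsum_geometric_of_lt_one hq0 hq1]
  exact (summable hq0 hf hq1 m).tsum_le_tsum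
    (fun i => mul_le_of_le_one_right (pow_nonneg hq0 i) (hf _).2)
    (summable_geometric_of_lt_one hq0 hq1)

theorem one_sub_mul_mem_Icc (m : ℤ) : (1 - q) * discountedTail q f m ∈ Set.Icc 0 1 := by
  have hpos : 0 < 1 - q := by linarith
  refine ⟨mul_nonneg hpos.le (nonneg hq0 hf m), ?_⟩
  calc (1 - q) * discountedTail q f m ≤ (1 - q) * (1 - q)⁻¹ :=
        mul_le_mul_of_nonneg_left (le_inv_one_sub hq0 hf hq1 m) hpos.le
    _ = 1 := mul_inv_cancel₀ hpos.ne'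

variable {g : ℤ → ℝ} (hg0 : ∀ k, k ≤ 0 → g k = 0)
  (hstein : ∀ k, 0 ≤ k → q * g (k + 1) - g k = f k - (1 - q) * discountedTail q f 0)
include hg0 hstein

theorem eq_sub_of_stein {k : ℤ} (hk : 0 ≤ k) :
    g k = discountedTail q f 0 - discountedTail q f k := by
  lift k to ℕ using hk
  let h : ℕ → ℝ := fun n => g n - (discountedTail q f 0 - discountedTail q f n)
  have hrec (n : ℕ) : h n = q * h (n + 1) := by
    have hn := hstein n n.cast_nonneg
    have hT := eq_add_mul_succ (summable hq0 hf hq1 n)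
    simp only [h, Nat.cast_succ]
    linarith
  have h0 : h 0 = 0 := by simp [h, hg0 0 le_rfl]
  exact sub_eq_zero.mp (eq_zero_of_eq_mul_succ h0 hrec k)

theorem mem_Icc_of_stein (n : ℤ) :
    g n ∈ Set.Icc (discountedTail q f 0 - (1 - q)⁻¹) (discountedTail q f 0) := by
  rcases le_total n 0 with hn | hn
  · rw [hg0 n hn]
    exact ⟨sub_nonpos.mpr (le_inv_one_sub hq0 hf hq1 0), nonneg hq0 hf 0⟩
  · rw [eq_sub_of_stein hq0 hf hq1 hg0 hstein hn]
    exact ⟨by linarith [le_inv_one_sub hq0 hf hq1 n], by linarith [nonneg hq0 hf n]⟩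

theorem abs_sub_succ_le_one_of_stein (n : ℤ) : |g (n + 1) - g n| ≤ 1 := by
  rcases lt_or_ge n 0 with hn | hn
  · rw [hg0 n hn.le, hg0 (n + 1) (by omega), sub_zero, abs_zero]
    exact zero_le_one
  · rw [eq_sub_of_stein hq0 hf hq1 hg0 hstein hn,
      eq_sub_of_stein hq0 hf hq1 hg0 hstein (by omega : 0 ≤ n + 1),
      eq_add_mul_succ (summable hq0 hf hq1 n), abs_le]
    obtain ⟨hT0, hT1⟩ := one_sub_mul_mem_Icc hq0 hf hq1 (n + 1)
    obtain ⟨hf0, hf1⟩ := hf n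
    constructor <;> linarith

end discountedTail

theorem stmt0_general (p : ℝ) (hp0 : 0 < p) (hp1 : p ≤ 1)
    (A : Set ℤ)
    (g : ℤ → ℝ)
    (hg0 : ∀ k : ℤ, k ≤ 0 → g k = 0)
    (hgeq : ∀ k : ℤ, 0 ≤ k →
      (1 - p) * g (k + 1) - g k =
        A.indicator (fun _ => (1 : ℝ)) k
          - ∑' n : ℕ, A.indicator (fun j => p * (1 - p) ^ j.toNat) (n : ℤ)) :
    ∀ j k : ℤ, |g j - g (j + k)| ≤ min (|(k : ℝ)|) (1 / p) := by
  set f : ℤ → ℝ := A.indicator fun _ => 1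
  have hq0 : 0 ≤ 1 - p := by linarith
  have hq1 : 1 - p < 1 := by linarith
  have hf (m : ℤ) : f m ∈ Set.Icc 0 1 := by by_cases h : m ∈ A <;> simp [f, h]
  have hprob : ∑' n : ℕ, A.indicator (fun j => p * (1 - p) ^ j.toNat) (n : ℤ) =
      (1 - (1 - p)) * discountedTail (1 - p) f 0 := by
    rw [discountedTail, ← tsum_mul_left]
    refine tsum_congr fun n => ?_
    by_cases h : (n : ℤ) ∈ A <;> simp [f, h]
  have hstein (k : ℤ) (hk : 0 ≤ k) : (1 - p) * g (k + 1) - g k =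
      f k - (1 - (1 - p)) * discountedTail (1 - p) f 0 := hprob ▸ hgeq k hk
  intro j k
  refine le_min ?_ ?_
  · simpa using abs_sub_add_le_mul_abs
      (discountedTail.abs_sub_succ_le_one_of_stein hq0 hf hq1 hg0 hstein) j k
  · simpa [Real.dist_eq] using Real.dist_le_of_mem_Icc
      (discountedTail.mem_Icc_of_stein hq0 hf hq1 hg0 hstein j)
      (discountedTail.mem_Icc_of_stein hq0 hf hq1 hg0 hstein (j + k))

/-- Stein's method for geometric approximation: the solution `g_A` of the Stein equation
for the `Geom(p)` distribution on `{0,1,2,...}` satisfies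
`|g_A(j) - g_A(j+k)| ≤ min(|k|, 1/p)` for all integers `j, k`. -/
theorem stmt0 (p : ℝ) (hp0 : 0 < p) (hp1 : p ≤ 1)
    (A : Set ℤ) (hA : A ⊆ {k : ℤ | 0 ≤ k})
    (g : ℤ → ℝ)
    (hg0 : ∀ k : ℤ, k ≤ 0 → g k = 0)
    (hgeq : ∀ k : ℤ, 0 ≤ k →
      (1 - p) * g (k + 1) - g k =
        A.indicator (fun _ => (1 : ℝ)) k
          - ∑' n : ℕ, A.indicator (fun j => p * (1 - p) ^ j.toNat) (n : ℤ)) :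
    ∀ j k : ℤ, |g j - g (j + k)| ≤ min (|(k : ℝ)|) (1 / p) :=
  stmt0_general p hp0 hp1 A g hg0 hgeq
end

section
/- Let τ be a non-negative random variable with P(τ > u)·P(τ > v) ≤ P(τ > u + v) for all u, v ≥ 0 (the NWU property), and let ξ be an exponential random variable with rate λ independent of τ with P(τ > ξ) > 0. Define σ by P(σ > u) = P(τ > u + ξ)/P(τ > ξ). Then σ is stochastically larger than τ, i.e. P(σ > u) ≥ P(τ > u) for all u ≥ 0. -/
/-!
Conditioning on `ξ`, independence gives `P(τ > u + ξ) = E[S(u + ξ)]` and `P(τ > ξ) = E[S(ξ)]`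
for the survival function `S(v) = P(τ > v)`. The NWU inequality `S(u) S(ξ) ≤ S(u + ξ)` holds
pointwise since `ξ ≥ 0`; taking expectations gives `S(u) P(τ > ξ) ≤ P(τ > u + ξ)`.
-/

open MeasureTheory ProbabilityTheory

section

variable {Ω : Type*} [MeasurableSpace Ω] {μ : Measure Ω}

theorem ProbabilityTheory.IndepFun.measure_preimage_prod_eq_lintegral
    {α β : Type*} [MeasurableSpace α] [MeasurableSpace β] [IsFiniteMeasure μ]
    {X : Ω → α} {Y : Ω → β} (hXY : IndepFun X Y μ) (hX : Measurable X) (hY : Measurable Y)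
    {s : Set (α × β)} (hs : MeasurableSet s) :
    μ ((fun ω => (X ω, Y ω)) ⁻¹' s) = ∫⁻ y, μ.map X ((fun x => (x, y)) ⁻¹' s) ∂μ.map Y := by
  rw [← Measure.map_apply (hX.prodMk hY) hs,
    (indepFun_iff_map_prod_eq_prod_map_map hX.aemeasurable hY.aemeasurable).mp hXY,
    Measure.prod_apply_symm hs]

theorem ProbabilityTheory.IndepFun.measure_add_lt_eq_lintegral [IsFiniteMeasure μ]
    {τ ξ : Ω → ℝ} (hτξ : IndepFun τ ξ μ) (hτ : Measurable τ) (hξ : Measurable ξ) (c : ℝ) :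
    μ {ω | c + ξ ω < τ ω} = ∫⁻ y, μ {ω | c + y < τ ω} ∂μ.map ξ := by
  have hs : MeasurableSet {p : ℝ × ℝ | c + p.2 < p.1} :=
    measurableSet_lt (measurable_const.add measurable_snd) measurable_fst
  refine (hτξ.measure_preimage_prod_eq_lintegral hτ hξ hs).trans (lintegral_congr fun y => ?_)
  exact Measure.map_apply hτ (s := Set.Ioi (c + y)) measurableSet_Ioi

theorem measure_lt_mul_measure_lt_le_measure_add_lt [IsFiniteMeasure μ]
    {τ ξ : Ω → ℝ} (hτξ : IndepFun τ ξ μ) (hτ : Measurable τ) (hξ : Measurable ξ)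
    (hξ0 : ∀ ω, 0 ≤ ξ ω) {u : ℝ}
    (hNWU : ∀ v, 0 ≤ v → μ {ω | u < τ ω} * μ {ω | v < τ ω} ≤ μ {ω | u + v < τ ω}) :
    μ {ω | u < τ ω} * μ {ω | ξ ω < τ ω} ≤ μ {ω | u + ξ ω < τ ω} := by
  have hξ_nonneg : ∀ᵐ v ∂μ.map ξ, 0 ≤ v :=
    (ae_map_iff hξ.aemeasurable (measurableSet_le measurable_const measurable_id)).mpr
      (.of_forall hξ0)
  have hS : Measurable fun v : ℝ => μ {ω | v < τ ω} :=
    Antitone.measurable fun a b hab => measure_mono fun ω (h : b < τ ω) => hab.trans_lt h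
  calc μ {ω | u < τ ω} * μ {ω | ξ ω < τ ω}
      = ∫⁻ v, μ {ω | u < τ ω} * μ {ω | v < τ ω} ∂μ.map ξ := by
        simpa [lintegral_const_mul _ hS] using
          congrArg (μ {ω | u < τ ω} * ·) (hτξ.measure_add_lt_eq_lintegral hτ hξ 0)
    _ ≤ ∫⁻ v, μ {ω | u + v < τ ω} ∂μ.map ξ :=
        lintegral_mono_ae (hξ_nonneg.mono fun v hv => hNWU v hv)
    _ = μ {ω | u + ξ ω < τ ω} := (hτξ.measure_add_lt_eq_lintegral hτ hξ u).symm

end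

theorem stmt7_general {Ω : Type*} [MeasurableSpace Ω] (μ : Measure Ω) [IsProbabilityMeasure μ]
    (τ ξ : Ω → ℝ) (hτ : Measurable τ) (hξ : Measurable ξ)
    (hξ0 : ∀ ω, 0 ≤ ξ ω)
    (hNWU : ∀ u v : ℝ, 0 ≤ u → 0 ≤ v →
      (μ {ω | u < τ ω}).toReal * (μ {ω | v < τ ω}).toReal ≤ (μ {ω | u + v < τ ω}).toReal)
    (hindep : IndepFun τ ξ μ)
    (hpos : 0 < (μ {ω | ξ ω < τ ω}).toReal) :
    ∀ u : ℝ, 0 ≤ u →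
      (μ {ω | u < τ ω}).toReal ≤
        (μ {ω | u + ξ ω < τ ω}).toReal / (μ {ω | ξ ω < τ ω}).toReal := by
  intro u hu
  have hNWU' : ∀ v, 0 ≤ v → μ {ω | u < τ ω} * μ {ω | v < τ ω} ≤ μ {ω | u + v < τ ω} :=
    fun v hv => (ENNReal.toReal_le_toReal (by finiteness) (by finiteness)).mp <| by
      simpa only [ENNReal.toReal_mul] using hNWU u v hu hv
  rw [le_div_iff₀ hpos, ← ENNReal.toReal_mul]
  exact ENNReal.toReal_mono (by finiteness)
    (measure_lt_mul_measure_lt_le_measure_add_lt hindep hτ hξ hξ0 hNWU')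

/-- If `τ ≥ 0` is NWU and `ξ ~ Exp(l)` is independent of `τ` with `P(τ > ξ) > 0`, then the
random variable `σ` with survival function `P(σ > u) = P(τ > u + ξ)/P(τ > ξ)` is
stochastically larger than `τ`. -/
theorem stmt7 {Ω : Type*} [MeasurableSpace Ω] (μ : Measure Ω) [IsProbabilityMeasure μ]
    (l : ℝ) (hl : 0 < l)
    (τ ξ : Ω → ℝ) (hτ : Measurable τ) (hξ : Measurable ξ)
    (hτ0 : ∀ ω, 0 ≤ τ ω) (hξ0 : ∀ ω, 0 ≤ ξ ω)
    (hNWU : ∀ u v : ℝ, 0 ≤ u → 0 ≤ v →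
      (μ {ω | u < τ ω}).toReal * (μ {ω | v < τ ω}).toReal ≤ (μ {ω | u + v < τ ω}).toReal)
    (hξexp : ∀ t : ℝ, 0 ≤ t → μ {ω | t < ξ ω} = ENNReal.ofReal (Real.exp (-l * t)))
    (hindep : IndepFun τ ξ μ)
    (hpos : 0 < (μ {ω | ξ ω < τ ω}).toReal) :
    ∀ u : ℝ, 0 ≤ u →
      (μ {ω | u < τ ω}).toReal ≤
        (μ {ω | u + ξ ω < τ ω}).toReal / (μ {ω | ξ ω < τ ω}).toReal :=
  stmt7_general μ τ ξ hτ hξ hξ0 hNWU hindep hpos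
end

section
/- Let τ be a non-negative integrable random variable and ξ ~ Exp(λ) independent of τ, with p = P(τ < ξ) = E[e^{-λτ}] < 1. Define σ by P(σ > u) = P(τ > u + ξ)/P(τ > ξ). Then E[σ] = E[τ]/(1-p) - 1/λ. -/
open MeasureTheory ProbabilityTheory Set

/-!
By the layer-cake formula,
`(1 - p) E[σ] = ∫₀^∞ P(τ > u + ξ) du = E[(τ - ξ)⁺] = E[τ] - E[min(τ, ξ)]`, where
`P(ξ < τ) = 1 - p` because the law of `ξ` has no atoms. By independence
`E[min(τ, ξ)] = ∫₀^∞ P(τ > u) e^{-λu} du`, while integrating `P(τ > u)` against the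
exponential density gives `P(ξ < τ) = λ ∫₀^∞ P(τ > u) e^{-λu} du`; hence
`λ E[min(τ, ξ)] = 1 - p`.
-/

instance ProbabilityTheory.nullSingletonClass_expMeasure (l : ℝ) :
    NullSingletonClass (expMeasure l) :=
  ⟨fun a => withDensity_absolutelyContinuous _ _ (measure_singleton a)⟩

lemma ProbabilityTheory.integral_expMeasure {l : ℝ} (hl : 0 < l) (g : ℝ → ℝ) :
    ∫ x, g x ∂expMeasure l = l * ∫ x in Ioi 0, g x * Real.exp (-l * x) := by
  have hpdf : ∀ x, (exponentialPDF l x).toReal • g x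
      = (Ici 0).indicator (fun x => l * (g x * Real.exp (-l * x))) x := by
    intro x
    by_cases hx : 0 ≤ x
    · rw [exponentialPDF_of_nonneg hx, ENNReal.toReal_ofReal (by positivity),
        indicator_of_mem (mem_Ici.2 hx), smul_eq_mul, neg_mul]
      ring
    · rw [exponentialPDF_of_neg (not_le.1 hx), indicator_of_notMem (by simpa using hx)]
      simp
  have hdens : expMeasure l = volume.withDensity (exponentialPDF l) := rfl
  rw [hdens, integral_withDensity_eq_integral_toReal_smul
    (show Measurable (exponentialPDF l) from (measurable_exponentialPDFReal l).ennreal_ofReal)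
    (ae_of_all _ fun _ => ENNReal.ofReal_lt_top)]
  simp_rw [hpdf]
  rw [integral_indicator measurableSet_Ici, integral_Ici_eq_integral_Ioi, integral_const_mul]

section Independence

variable {Ω α β : Type*} [MeasurableSpace Ω] [MeasurableSpace α] [MeasurableSpace β]
  {μ : Measure Ω} [IsFiniteMeasure μ]

lemma ProbabilityTheory.IndepFun.measure_preimage_prodMk {X : Ω → α} {Y : Ω → β}
    (h : IndepFun X Y μ) (hX : Measurable X) (hY : Measurable Y) {s : Set (α × β)}
    (hs : MeasurableSet s) :
    μ ((fun ω => (X ω, Y ω)) ⁻¹' s) = ∫⁻ x, μ.map Y (Prod.mk x ⁻¹' s) ∂μ.map X := by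
  rw [← Measure.map_apply (hX.prodMk hY) hs,
    (indepFun_iff_map_prod_eq_prod_map_map hX.aemeasurable hY.aemeasurable).1 h,
    Measure.prod_apply hs]

lemma ProbabilityTheory.IndepFun.measure_eq_eq_zero [MeasurableEq α] {X Y : Ω → α}
    (h : IndepFun X Y μ) (hX : Measurable X) (hY : Measurable Y)
    [NullSingletonClass (μ.map Y)] : μ {ω | X ω = Y ω} = 0 := by
  have hsec : ∀ x : α, Prod.mk x ⁻¹' diagonal α = {x} := fun x => by ext; simp [eq_comm]
  change μ ((fun ω => (X ω, Y ω)) ⁻¹' diagonal α) = 0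
  simp [h.measure_preimage_prodMk hX hY measurableSet_diagonal, hsec]

end Independence

section

variable {Ω : Type*} [MeasurableSpace Ω] {μ : Measure Ω}

lemma integrable_min_of_nonneg {τ ξ : Ω → ℝ} (hτint : Integrable τ μ) (hξ : Measurable ξ)
    (hτ0 : ∀ ω, 0 ≤ τ ω) (hξ0 : ∀ ω, 0 ≤ ξ ω) : Integrable (fun ω => min (τ ω) (ξ ω)) μ :=
  hτint.mono (hτint.aestronglyMeasurable.inf hξ.aestronglyMeasurable) <| ae_of_all _ fun ω => by
    simp only [Real.norm_eq_abs, abs_of_nonneg (le_min (hτ0 ω) (hξ0 ω)), abs_of_nonneg (hτ0 ω)]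
    exact min_le_left _ _

lemma integral_mul_eq_integral_max_sub {Ω' : Type*} [MeasurableSpace Ω'] {ν : Measure Ω'}
    {σ : Ω' → ℝ} (hσint : Integrable σ ν) (hσ0 : ∀ ω, 0 ≤ σ ω)
    {τ ξ : Ω → ℝ} (hint : Integrable (fun ω => max (τ ω - ξ ω) 0) μ) {c : ℝ}
    (hσlaw : ∀ u : ℝ, 0 ≤ u → ν.real {ω | u < σ ω} * c = μ.real {ω | u + ξ ω < τ ω}) :
    (∫ ω, σ ω ∂ν) * c = ∫ ω, max (τ ω - ξ ω) 0 ∂μ := by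
  rw [hσint.integral_eq_integral_meas_lt (ae_of_all _ hσ0), ← integral_mul_const,
    hint.integral_eq_integral_meas_lt (ae_of_all _ fun _ => le_max_right _ _)]
  refine setIntegral_congr_fun measurableSet_Ioi fun u (hu : 0 < u) => ?_
  have hset : {ω | u < max (τ ω - ξ ω) 0} = {ω | u + ξ ω < τ ω} := by
    ext ω
    simp only [mem_ofPred_eq, lt_max_iff, hu.not_gt, or_false]
    constructor <;> intro h <;> linarith
  rw [hset, hσlaw u hu.le]

lemma integral_min_eq {l : ℝ} {τ ξ : Ω → ℝ} (hτint : Integrable τ μ) (hξ : Measurable ξ)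
    (hτ0 : ∀ ω, 0 ≤ τ ω) (hξ0 : ∀ ω, 0 ≤ ξ ω) (hindep : IndepFun τ ξ μ)
    (hξexp : ∀ t : ℝ, 0 ≤ t → μ {ω | t < ξ ω} = ENNReal.ofReal (Real.exp (-l * t))) :
    ∫ ω, min (τ ω) (ξ ω) ∂μ = ∫ u in Ioi 0, μ.real {ω | u < τ ω} * Real.exp (-l * u) := by
  rw [(integrable_min_of_nonneg hτint hξ hτ0 hξ0).integral_eq_integral_meas_lt
    (ae_of_all _ fun ω => le_min (hτ0 ω) (hξ0 ω))]
  refine setIntegral_congr_fun measurableSet_Ioi fun u hu => ?_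
  have hset : {ω | u < min (τ ω) (ξ ω)} = τ ⁻¹' Ioi u ∩ ξ ⁻¹' Ioi u := by
    ext ω; simp
  rw [hset, measureReal_def, hindep.measure_inter_preimage_eq_mul _ _ measurableSet_Ioi
    measurableSet_Ioi, ENNReal.toReal_mul]
  change _ * (μ {ω | u < ξ ω}).toReal = _
  rw [hξexp u hu.le, ENNReal.toReal_ofReal (Real.exp_nonneg _)]
  rfl

variable [IsProbabilityMeasure μ]

lemma map_eq_expMeasure {l : ℝ} (hl : 0 < l) {ξ : Ω → ℝ} (hξ : Measurable ξ)
    (hξ0 : ∀ ω, 0 ≤ ξ ω)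
    (hξexp : ∀ t : ℝ, 0 ≤ t → μ {ω | t < ξ ω} = ENNReal.ofReal (Real.exp (-l * t))) :
    μ.map ξ = expMeasure l := by
  have := isProbabilityMeasure_expMeasure hl
  have := Measure.isProbabilityMeasure_map (μ := μ) hξ.aemeasurable
  refine Measure.eq_of_cdf _ _ (StieltjesFunction.ext fun x => ?_)
  rw [cdf_expMeasure_eq hl, cdf_eq_real, map_measureReal_apply hξ measurableSet_Iic]
  split_ifs with hx
  · rw [← compl_Ioi, preimage_compl, probReal_compl_eq_one_sub (hξ measurableSet_Ioi),
      measureReal_def]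
    simp [preimage, hξexp x hx, Real.exp_nonneg]
  · have : ξ ⁻¹' Iic x = ∅ := eq_empty_of_forall_notMem fun ω hω => hx ((hξ0 ω).trans hω)
    simp [this]

lemma measureReal_lt_eq_one_sub {X Y : Ω → ℝ} (hX : Measurable X) (hY : Measurable Y)
    (h : μ {ω | X ω = Y ω} = 0) : μ.real {ω | Y ω < X ω} = 1 - μ.real {ω | X ω < Y ω} := by
  have hle : {ω | X ω ≤ Y ω} =ᵐ[μ] {ω | X ω < Y ω} := by
    filter_upwards [measure_eq_zero_iff_ae_notMem.1 h] with ω hω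
    exact propext (show X ω ≤ Y ω ↔ X ω < Y ω from ⟨fun hle => lt_of_le_of_ne hle hω, le_of_lt⟩)
  rw [← measureReal_congr hle, ← probReal_compl_eq_one_sub (measurableSet_le hX hY)]
  simp [compl_ofPred]

lemma measureReal_lt_eq_mul_integral {l : ℝ} (hl : 0 < l) {τ ξ : Ω → ℝ} (hτ : Measurable τ)
    (hξ : Measurable ξ) (hindep : IndepFun τ ξ μ) (hlaw : μ.map ξ = expMeasure l) :
    μ.real {ω | ξ ω < τ ω} = l * ∫ u in Ioi 0, μ.real {ω | u < τ ω} * Real.exp (-l * u) := by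
  have hsurv : Measurable fun u : ℝ => μ.map τ (Ioi u) :=
    Antitone.measurable fun _ _ h => measure_mono (Ioi_subset_Ioi h)
  change (μ ((fun ω => (ξ ω, τ ω)) ⁻¹' {q : ℝ × ℝ | q.1 < q.2})).toReal = _
  have hsec : ∀ u : ℝ, Prod.mk u ⁻¹' {q : ℝ × ℝ | q.1 < q.2} = Ioi u := fun _ => rfl
  rw [hindep.symm.measure_preimage_prodMk hξ hτ (measurableSet_lt measurable_fst measurable_snd),
    hlaw]
  simp only [hsec]
  rw [← integral_toReal hsurv.aemeasurable (ae_of_all _ fun _ => measure_lt_top _ _),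
    integral_expMeasure hl]
  simp only [Measure.map_apply hτ measurableSet_Ioi]
  rfl

end

theorem stmt8_general {Ω : Type*} [MeasurableSpace Ω] (μ : Measure Ω) [IsProbabilityMeasure μ]
    {Ω' : Type*} [MeasurableSpace Ω'] (ν : Measure Ω')
    (l : ℝ) (hl : 0 < l)
    (τ ξ : Ω → ℝ) (hτ : Measurable τ) (hξ : Measurable ξ)
    (hτ0 : ∀ ω, 0 ≤ τ ω) (hξ0 : ∀ ω, 0 ≤ ξ ω)
    (hτint : Integrable τ μ)
    (hξexp : ∀ t : ℝ, 0 ≤ t → μ {ω | t < ξ ω} = ENNReal.ofReal (Real.exp (-l * t)))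
    (hindep : IndepFun τ ξ μ)
    (p : ℝ) (hp : p = (μ {ω | τ ω < ξ ω}).toReal) (hp1 : p < 1)
    (σ : Ω' → ℝ) (hσ0 : ∀ ω, 0 ≤ σ ω) (hσint : Integrable σ ν)
    (hσlaw : ∀ u : ℝ, 0 ≤ u →
      (ν {ω | u < σ ω}).toReal * (μ {ω | ξ ω < τ ω}).toReal =
        (μ {ω | u + ξ ω < τ ω}).toReal) :
    ∫ ω, σ ω ∂ν = (∫ ω, τ ω ∂μ) / (1 - p) - 1 / l := by
  have hlaw := map_eq_expMeasure hl hξ hξ0 hξexp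
  have : NullSingletonClass (μ.map ξ) := hlaw ▸ inferInstance
  have hrace : μ.real {ω | ξ ω < τ ω} = 1 - p :=
    hp ▸ measureReal_lt_eq_one_sub hτ hξ (hindep.measure_eq_eq_zero hτ hξ)
  have hmin := integrable_min_of_nonneg hτint hξ hτ0 hξ0
  have hexcess : (∫ ω, σ ω ∂ν) * (1 - p) = ∫ ω, τ ω ∂μ - ∫ ω, min (τ ω) (ξ ω) ∂μ := by
    have hsub : ∀ ω, τ ω - min (τ ω) (ξ ω) = max (τ ω - ξ ω) 0 := fun ω => by
      rcases le_total (τ ω) (ξ ω) with h | h <;> simp [h]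
    rw [← integral_sub hτint hmin, ← hrace]
    simp only [hsub]
    exact integral_mul_eq_integral_max_sub hσint hσ0 ((hτint.sub hmin).congr (ae_of_all _ hsub))
      hσlaw
  have hmean : l * ∫ ω, min (τ ω) (ξ ω) ∂μ = 1 - p := by
    rw [integral_min_eq hτint hξ hτ0 hξ0 hindep hξexp,
      ← measureReal_lt_eq_mul_integral hl hτ hξ hindep hlaw, hrace]
  have hp1' : 1 - p ≠ 0 := by linarith
  field_simp
  linear_combination l * hexcess - hmean

/-- If `τ ≥ 0` is integrable, `ξ ~ Exp(l)` is independent of `τ`, `p = P(τ < ξ) < 1`, and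
`σ` has survival function `P(σ > u) = P(τ > u + ξ)/P(τ > ξ)`, then
`E[σ] = E[τ]/(1-p) - 1/l`. -/
theorem stmt8 {Ω : Type*} [MeasurableSpace Ω] (μ : Measure Ω) [IsProbabilityMeasure μ]
    {Ω' : Type*} [MeasurableSpace Ω'] (ν : Measure Ω') [IsProbabilityMeasure ν]
    (l : ℝ) (hl : 0 < l)
    (τ ξ : Ω → ℝ) (hτ : Measurable τ) (hξ : Measurable ξ)
    (hτ0 : ∀ ω, 0 ≤ τ ω) (hξ0 : ∀ ω, 0 ≤ ξ ω)
    (hτint : Integrable τ μ)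
    (hξexp : ∀ t : ℝ, 0 ≤ t → μ {ω | t < ξ ω} = ENNReal.ofReal (Real.exp (-l * t)))
    (hindep : IndepFun τ ξ μ)
    (p : ℝ) (hp : p = (μ {ω | τ ω < ξ ω}).toReal) (hp1 : p < 1)
    (σ : Ω' → ℝ) (hσ : Measurable σ) (hσ0 : ∀ ω, 0 ≤ σ ω) (hσint : Integrable σ ν)
    (hσlaw : ∀ u : ℝ, 0 ≤ u →
      (ν {ω | u < σ ω}).toReal * (μ {ω | ξ ω < τ ω}).toReal =
        (μ {ω | u + ξ ω < τ ω}).toReal) :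
    ∫ ω, σ ω ∂ν = (∫ ω, τ ω ∂μ) / (1 - p) - 1 / l :=
  stmt8_general μ ν l hl τ ξ hτ hξ hτ0 hξ0 hτint hξexp hindep p hp hp1 σ hσ0 hσint hσlaw
end
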